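/- arXiv:2403.06541 — 6 statements merged into one kernel-verified Lean document; each statement's English description precedes it below -/
import Mathlib

section
/- Let T ≥ 0, δ ∈ (0,1), and M : [T,∞) → ℝ≥0 be C², with (M′(t))² ≤ δ M(t) M″(t) for all t ≥ T. Then M is non-increasing on [T,∞); in particular M(t) ≤ M(T) for all t ≥ T. -/
/-!
Where `M'' < 0` the inequality forces `M = M' = 0`, and then `M` would turn negative just to the
right; hence `M'' ≥ 0` and `M'` is nondecreasing. If `M'(a) > 0`, then `M` and `M'` stay positive on
`[a, ∞)`, while `(M / M')' = 1 - M M'' / M'² ≤ 1 - 1/δ < 0`: the positive quotient `M / M'` would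
decrease at a fixed linear rate forever.
-/

open Set

theorem IsMinOn.deriv_deriv_nonneg_of_deriv_eq_zero {f : ℝ → ℝ} {t : ℝ} (hf : ContDiff ℝ 2 f)
    (hmin : IsMinOn f (Ici t) t) (hf' : deriv f t = 0) : 0 ≤ deriv (deriv f) t := by
  by_contra! hneg
  have hcont : Continuous (deriv (deriv f)) := (ContDiff.deriv' (n := 1) hf).continuous_deriv_one
  obtain ⟨b, htb, hb⟩ := mem_nhdsGE_iff_exists_Icc_subset.mp
    (nhdsWithin_le_nhds (hcont.continuousAt.eventually_lt continuousAt_const hneg))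
  have hf'_anti : StrictAntiOn (deriv f) (Icc t b) :=
    strictAntiOn_of_deriv_neg (convex_Icc t b) hf.differentiable_deriv_two.continuous.continuousOn
      fun x hx ↦ hb (interior_subset hx)
  have hf_anti : StrictAntiOn f (Icc t b) :=
    strictAntiOn_of_deriv_neg (convex_Icc t b) hf.continuous.continuousOn fun x hx ↦ by
      rw [interior_Icc] at hx
      exact hf' ▸ hf'_anti (left_mem_Icc.mpr htb.le) (Ioo_subset_Icc_self hx) hx.1
  exact (hf_anti (left_mem_Icc.mpr htb.le) (right_mem_Icc.mpr htb.le) htb).not_ge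
    (hmin (mem_Ici.mpr htb.le))

theorem not_forall_sq_deriv_le_mul_deriv_deriv {f : ℝ → ℝ} {a c : ℝ} (hc : 0 < c)
    (hf : Differentiable ℝ f) (hf' : Differentiable ℝ (deriv f))
    (hpos : ∀ t, a ≤ t → 0 < f t) (hpos' : ∀ t, a ≤ t → 0 < deriv f t) :
    ¬ ∀ t, a ≤ t → (1 + c) * deriv f t ^ 2 ≤ f t * deriv (deriv f) t := by
  intro hineq
  set g : ℝ → ℝ := fun t ↦ f t / deriv f t + c * t
  have hg : ∀ t, a ≤ t → HasDerivAt g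
      ((deriv f t * deriv f t - f t * deriv (deriv f) t) / deriv f t ^ 2 + c) t := fun t ht ↦
    ((hf t).hasDerivAt.div (hf' t).hasDerivAt (hpos' t ht).ne').add
      ((hasDerivAt_id t).const_mul c |>.congr_deriv (mul_one c))
  have hg_anti : AntitoneOn g (Ici a) := by
    refine antitoneOn_of_deriv_nonpos (convex_Ici a)
      (HasDerivAt.continuousOn fun t ht ↦ hg t ht)
      (fun t ht ↦ (hg t (interior_subset ht)).differentiableAt.differentiableWithinAt)
      fun t ht ↦ ?_
    rw [interior_Ici] at ht
    have hsq : 0 < deriv f t ^ 2 := pow_pos (hpos' t ht.le) 2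
    rw [(hg t ht.le).deriv, div_add' _ _ _ hsq.ne']
    exact div_nonpos_of_nonpos_of_nonneg (by nlinarith [hineq t ht.le]) hsq.le
  have hg_le : ∀ t, a ≤ t → c * t < g a := fun t ht ↦
    (lt_add_of_pos_left _ (div_pos (hpos t ht) (hpos' t ht))).trans_le
      (hg_anti self_mem_Ici (mem_Ici.mpr ht) ht)
  have := hg_le (max a (g a / c)) (le_max_left _ _)
  rw [← not_le] at this
  exact this ((mul_div_cancel₀ _ hc.ne').symm.le.trans
    (mul_le_mul_of_nonneg_left (le_max_right _ _) hc.le))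

section

variable {M : ℝ → ℝ} {T δ : ℝ}

theorem deriv_deriv_nonneg_of_sq_deriv_le (hδ0 : 0 < δ) (hM : ContDiff ℝ 2 M)
    (hMnonneg : ∀ t, T ≤ t → 0 ≤ M t)
    (hineq : ∀ t, T ≤ t → deriv M t ^ 2 ≤ δ * M t * deriv (deriv M) t) {t : ℝ} (ht : T ≤ t) :
    0 ≤ deriv (deriv M) t := by
  by_contra! hneg
  have hMt : M t = 0 := by
    by_contra hMt
    have : δ * M t * deriv (deriv M) t < 0 :=
      mul_neg_of_pos_of_neg (mul_pos hδ0 ((hMnonneg t ht).lt_of_ne' hMt)) hneg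
    nlinarith [sq_nonneg (deriv M t), hineq t ht]
  have hM't : deriv M t = 0 := by
    simpa [hMt] using hineq t ht
  refine hneg.not_ge (IsMinOn.deriv_deriv_nonneg_of_deriv_eq_zero hM (fun s hs ↦ ?_) hM't)
  simpa [hMt] using hMnonneg s (ht.trans hs)

theorem deriv_nonpos_of_sq_deriv_le (hδ0 : 0 < δ) (hδ1 : δ < 1) (hM : ContDiff ℝ 2 M)
    (hMnonneg : ∀ t, T ≤ t → 0 ≤ M t)
    (hineq : ∀ t, T ≤ t → deriv M t ^ 2 ≤ δ * M t * deriv (deriv M) t) {a : ℝ} (ha : T ≤ a) :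
    deriv M a ≤ 0 := by
  by_contra! hpos
  have hM' : MonotoneOn (deriv M) (Ici T) :=
    monotoneOn_of_deriv_nonneg (convex_Ici T) hM.differentiable_deriv_two.continuous.continuousOn
      hM.differentiable_deriv_two.differentiableOn fun t ht ↦
        deriv_deriv_nonneg_of_sq_deriv_le hδ0 hM hMnonneg hineq (interior_subset ht)
  have hpos' : ∀ t, a ≤ t → 0 < deriv M t := fun t ht ↦
    hpos.trans_le (hM' (mem_Ici.mpr ha) (mem_Ici.mpr (ha.trans ht)) ht)
  have hMa : 0 < M a := by
    refine (hMnonneg a ha).lt_of_ne' fun hMa ↦ ?_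
    have := hineq a ha
    rw [hMa, mul_zero, zero_mul] at this
    exact hpos.ne' (pow_eq_zero_iff two_ne_zero |>.mp (le_antisymm this (sq_nonneg _)))
  have hMpos : ∀ t, a ≤ t → 0 < M t := fun t ht ↦
    hMa.trans_le <| monotoneOn_of_deriv_nonneg (convex_Ici a) hM.continuous.continuousOn
      (hM.differentiable two_ne_zero).differentiableOn
      (fun s hs ↦ (hpos' s (interior_subset hs)).le) self_mem_Ici (mem_Ici.mpr ht) ht
  have hc : 0 < δ⁻¹ - 1 := sub_pos.mpr ((one_lt_inv₀ hδ0).mpr hδ1)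
  refine not_forall_sq_deriv_le_mul_deriv_deriv hc (hM.differentiable two_ne_zero)
    hM.differentiable_deriv_two hMpos hpos' fun t ht ↦ ?_
  rw [add_sub_cancel, inv_mul_le_iff₀ hδ0, ← mul_assoc]
  exact hineq t (ha.trans ht)

end

theorem stmt_0_general (T δ : ℝ) (hδ0 : 0 < δ) (hδ1 : δ < 1)
    (M : ℝ → ℝ) (hM : ContDiff ℝ 2 M)
    (hMnonneg : ∀ t, T ≤ t → 0 ≤ M t)
    (hineq : ∀ t, T ≤ t → (deriv M t) ^ 2 ≤ δ * M t * deriv (deriv M) t) :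
    (∀ s t, T ≤ s → s ≤ t → M t ≤ M s) ∧ (∀ t, T ≤ t → M t ≤ M T) := by
  have hM_anti : AntitoneOn M (Ici T) :=
    antitoneOn_of_deriv_nonpos (convex_Ici T) hM.continuous.continuousOn
      (hM.differentiable two_ne_zero).differentiableOn fun t ht ↦
        deriv_nonpos_of_sq_deriv_le hδ0 hδ1 hM hMnonneg hineq (interior_subset ht)
  exact ⟨fun s t hs hst ↦ hM_anti hs (hs.trans hst) hst,
    fun t ht ↦ hM_anti self_mem_Ici ht ht⟩

theorem stmt_0 (T δ : ℝ) (hT : 0 ≤ T) (hδ0 : 0 < δ) (hδ1 : δ < 1)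
    (M : ℝ → ℝ) (hM : ContDiff ℝ 2 M)
    (hMnonneg : ∀ t, T ≤ t → 0 ≤ M t)
    (hineq : ∀ t, T ≤ t → (deriv M t) ^ 2 ≤ δ * M t * deriv (deriv M) t) :
    (∀ s t, T ≤ s → s ≤ t → M t ≤ M s) ∧ (∀ t, T ≤ t → M t ≤ M T) :=
  stmt_0_general T δ hδ0 hδ1 M hM hMnonneg hineq
end

section
/- Let C > 0 and M₀ : [0,∞) → ℝ be C² with M₀″(t) ≥ C·M₀(t) for all t ≥ 0. Then either M₀(t) → +∞ as t → +∞, or M₀(t) ≤ M₀(0)·e^{−√C·t} for all t ≥ 0. -/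
/-!
Put `r = √C` and `v = M₀' + r M₀`. Then `v' - r v = M₀'' - C M₀ ≥ 0`, so `e^{-rt} v` is
nondecreasing. If `v ≤ 0` on `[0, ∞)`, then `(e^{rt} M₀)' = e^{rt} v ≤ 0` and `e^{rt} M₀ ≤ M₀ 0`.
Otherwise `v(t) ≥ c e^{rt}` from some `t₀` on, with `c > 0`, and then `e^{rt} (M₀ - k e^{rt})`
is nondecreasing for `k = c / 2r`, which forces `M₀(t) ≥ k e^{rt} + O(e^{-rt}) → ∞`.
-/

open Real Filter Set

theorem mul_exp_le_of_mul_le_deriv {f f' : ℝ → ℝ} {a : ℝ} {D : Set ℝ} (hD : Convex ℝ D)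
    (hf : ∀ t ∈ D, HasDerivAt f (f' t) t) (h : ∀ t ∈ D, a * f t ≤ f' t)
    {s t : ℝ} (hs : s ∈ D) (ht : t ∈ D) (hst : s ≤ t) :
    f s * exp (a * (t - s)) ≤ f t := by
  have hg : ∀ x ∈ D, HasDerivAt (fun x => exp (-a * x) * f x)
      (exp (-a * x) * (f' x - a * f x)) x := fun x hx =>
    (((hasDerivAt_id' x).const_mul (-a)).exp.mul (hf x hx)).congr_deriv (by ring)
  have hmono : MonotoneOn (fun x => exp (-a * x) * f x) D :=
    monotoneOn_of_hasDerivWithinAt_nonneg hD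
      (fun x hx => (hg x hx).continuousAt.continuousWithinAt)
      (fun x hx => (hg x (interior_subset hx)).hasDerivWithinAt)
      (fun x hx => mul_nonneg (exp_pos _).le (sub_nonneg.2 (h x (interior_subset hx))))
  have hle : exp (-a * s) * f s ≤ exp (-a * t) * f t := hmono hs ht hst
  calc f s * exp (a * (t - s)) = exp (a * t) * (exp (-a * s) * f s) := by
        rw [mul_sub, exp_sub, neg_mul, exp_neg]; field_simp
    _ ≤ exp (a * t) * (exp (-a * t) * f t) := by gcongr
    _ = f t := by rw [← mul_assoc, ← exp_add]; simp

theorem le_mul_exp_neg_of_deriv_add_mul_nonpos {M M' : ℝ → ℝ} {r t₀ : ℝ}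
    (hM : ∀ t ≥ t₀, HasDerivAt M (M' t) t) (h : ∀ t ≥ t₀, M' t + r * M t ≤ 0)
    {t : ℝ} (ht : t₀ ≤ t) : M t ≤ M t₀ * exp (-r * (t - t₀)) := by
  have := mul_exp_le_of_mul_le_deriv (f := fun t => -M t) (a := -r) (convex_Ici t₀)
    (fun t ht => (hM t ht).neg) (fun t ht => by linarith [h t ht]) self_mem_Ici ht ht
  linarith

theorem tendsto_atTop_of_mul_exp_le_deriv_add_mul {M M' : ℝ → ℝ} {r c t₀ : ℝ} (hr : 0 < r)
    (hc : 0 < c) (hM : ∀ t ≥ t₀, HasDerivAt M (M' t) t)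
    (h : ∀ t ≥ t₀, c * exp (r * t) ≤ M' t + r * M t) :
    Tendsto M atTop atTop := by
  set k := c / (2 * r)
  have hk : 0 < k := by positivity
  have hkc : k * (2 * r) = c := div_mul_cancel₀ c (by positivity)
  have hf : ∀ t ≥ t₀, HasDerivAt (fun t => M t - k * exp (r * t))
      (M' t - k * (exp (r * t) * r)) t := fun t ht =>
    ((hM t ht).fun_sub (((hasDerivAt_id' t).const_mul r).exp.const_mul k)).congr_deriv (by ring)
  have hbound : ∀ t ≥ t₀,
      k * exp (r * t) + (M t₀ - k * exp (r * t₀)) * exp (-r * (t - t₀)) ≤ M t := fun t ht => by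
    have := mul_exp_le_of_mul_le_deriv (a := -r) (convex_Ici t₀) hf
      (fun t ht => by nlinarith [h t ht, exp_pos (r * t)]) self_mem_Ici ht ht
    linarith
  have hdecay : Tendsto (fun t => exp (-r * (t - t₀))) atTop (nhds 0) :=
    tendsto_exp_atBot.comp <|
      (tendsto_atTop_add_const_right _ (-t₀) tendsto_id).const_mul_atTop_of_neg (neg_lt_zero.2 hr)
        |>.congr fun t => by simp [sub_eq_add_neg]
  refine tendsto_atTop_mono' atTop (eventually_ge_atTop t₀ |>.mono hbound) ?_
  exact ((tendsto_exp_atTop.comp (tendsto_id.const_mul_atTop hr)).const_mul_atTop hk).atTop_add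
    (hdecay.const_mul _)

theorem stmt_1 (C : ℝ) (hC : 0 < C) (M₀ : ℝ → ℝ) (hM : ContDiff ℝ 2 M₀)
    (hineq : ∀ t, 0 ≤ t → C * M₀ t ≤ deriv (deriv M₀) t) :
    (Filter.Tendsto M₀ Filter.atTop Filter.atTop) ∨
      (∀ t, 0 ≤ t → M₀ t ≤ M₀ 0 * Real.exp (-Real.sqrt C * t)) := by
  set r := √C
  have hr : 0 < r := sqrt_pos.2 hC
  have hrr : r * r = C := mul_self_sqrt hC.le
  have hM' : ∀ t, HasDerivAt M₀ (deriv M₀ t) t := fun t =>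
    (hM.differentiable (by norm_num) t).hasDerivAt
  have hM'' : ∀ t, HasDerivAt (deriv M₀) (deriv (deriv M₀) t) t := fun t =>
    ((ContDiff.deriv' (n := 1) hM).differentiable (by norm_num) t).hasDerivAt
  have hv : ∀ t, HasDerivAt (fun t => deriv M₀ t + r * M₀ t)
      (deriv (deriv M₀) t + r * deriv M₀ t) t := fun t => (hM'' t).add ((hM' t).const_mul r)
  have hv_deriv_ge : ∀ t ≥ 0, r * (deriv M₀ t + r * M₀ t) ≤ deriv (deriv M₀) t + r * deriv M₀ t :=
    fun t ht => by have := hineq t ht; rw [← hrr] at this; linarith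
  by_cases hpos : ∃ t₀ ≥ 0, 0 < deriv M₀ t₀ + r * M₀ t₀
  · left
    obtain ⟨t₀, ht₀, hvt₀⟩ := hpos
    refine tendsto_atTop_of_mul_exp_le_deriv_add_mul (t₀ := t₀) hr
      (c := (deriv M₀ t₀ + r * M₀ t₀) * exp (-r * t₀)) (by positivity) (fun t _ => hM' t)
      fun t ht => ?_
    calc (deriv M₀ t₀ + r * M₀ t₀) * exp (-r * t₀) * exp (r * t)
        = (deriv M₀ t₀ + r * M₀ t₀) * exp (r * (t - t₀)) := by
          rw [mul_assoc, ← exp_add]; ring_nf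
      _ ≤ deriv M₀ t + r * M₀ t := mul_exp_le_of_mul_le_deriv (convex_Ici 0) (fun t _ => hv t)
          hv_deriv_ge ht₀ (ht₀.trans ht) ht
  · right
    push Not at hpos
    intro t ht
    simpa only [sub_zero] using le_mul_exp_neg_of_deriv_add_mul_nonpos (fun t _ => hM' t) hpos ht
end

section
/- Let T₀ ≥ 0, δ ∈ (0,1), and M : [T₀,∞) → ℝ be C² with M(T₀) > 0, M′(T₀) > 0, and (M′(t))² ≤ δ M(t) M″(t) whenever M ≥ 0 on [T₀,t]. Then M(t) > 0 for all t ≥ T₀ and M′(t) ≥ M′(T₀) for all t ≥ T₀. -/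
/-!
As long as `M > 0` on `[T₀, t)`, the inequality `(M')² ≤ δ M M''` with `δ > 0` forces `M'' ≥ 0` there,
so `M' ≥ M'(T₀) > 0` and `M` increases, giving `M(t) ≥ M(T₀) > 0`. Since `M` is continuous, a first
point where `M ≤ 0` would be such a `t`, so there is none.
-/

open Set

theorem pos_of_forall_pos_on_Ico {f : ℝ → ℝ} {a : ℝ} (hf : ContinuousOn f (Ici a))
    (h : ∀ c, a ≤ c → (∀ s ∈ Ico a c, 0 < f s) → 0 < f c) :
    ∀ t, a ≤ t → 0 < f t := by
  by_contra! hne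
  set B := Ici a ∩ f ⁻¹' Iic 0
  have hBne : B.Nonempty := hne
  have hBbdd : BddBelow B := ⟨a, fun s hs => hs.1⟩
  have hcB : sInf B ∈ B :=
    (hf.preimage_isClosed_of_isClosed isClosed_Ici isClosed_Iic).csInf_mem hBne hBbdd
  have hbefore : ∀ s ∈ Ico a (sInf B), 0 < f s := fun s hs => by
    by_contra! hs0
    exact hs.2.not_ge (csInf_le hBbdd ⟨hs.1, hs0⟩)
  exact (h _ hcB.1 hbefore).not_ge hcB.2

theorem nonneg_of_sq_le_mul {a b c δ : ℝ} (hδ : 0 < δ) (ha : 0 < a) (h : b ^ 2 ≤ δ * a * c) :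
    0 ≤ c :=
  nonneg_of_mul_nonneg_right (sq_nonneg b |>.trans h) (mul_pos hδ ha)

section

variable {M : ℝ → ℝ} {δ T₀ : ℝ}

theorem monotoneOn_deriv_of_pos_on_Ico (hδ : 0 < δ) (hM' : Differentiable ℝ (deriv M))
    (hineq : ∀ t, T₀ ≤ t → (∀ s ∈ Icc T₀ t, 0 ≤ M s) →
      (deriv M t) ^ 2 ≤ δ * M t * deriv (deriv M) t)
    {c : ℝ} (hpos : ∀ s ∈ Ico T₀ c, 0 < M s) :
    MonotoneOn (deriv M) (Icc T₀ c) := by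
  refine monotoneOn_of_deriv_nonneg (convex_Icc _ _) hM'.continuous.continuousOn
    hM'.differentiableOn fun s hs => ?_
  rw [interior_Icc] at hs
  have hMs_nonneg : ∀ u ∈ Icc T₀ s, 0 ≤ M u := fun u hu => (hpos u ⟨hu.1, hu.2.trans_lt hs.2⟩).le
  exact nonneg_of_sq_le_mul hδ (hpos s ⟨hs.1.le, hs.2⟩) (hineq s hs.1.le hMs_nonneg)

theorem pos_of_pos_on_Ico (hδ : 0 < δ) (hM : Differentiable ℝ M)
    (hM' : Differentiable ℝ (deriv M)) (hMT₀ : 0 < M T₀) (hM'T₀ : 0 < deriv M T₀)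
    (hineq : ∀ t, T₀ ≤ t → (∀ s ∈ Icc T₀ t, 0 ≤ M s) →
      (deriv M t) ^ 2 ≤ δ * M t * deriv (deriv M) t)
    {c : ℝ} (hc : T₀ ≤ c) (hpos : ∀ s ∈ Ico T₀ c, 0 < M s) :
    0 < M c := by
  have hmono := monotoneOn_deriv_of_pos_on_Ico hδ hM' hineq hpos
  have hM_mono : MonotoneOn M (Icc T₀ c) :=
    monotoneOn_of_deriv_nonneg (convex_Icc _ _) hM.continuous.continuousOn hM.differentiableOn
      fun s hs => hM'T₀.le.trans <|
        hmono (left_mem_Icc.mpr hc) (interior_subset hs) (interior_subset hs).1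
  exact hMT₀.trans_le (hM_mono (left_mem_Icc.mpr hc) (right_mem_Icc.mpr hc) hc)

end

theorem stmt_5_general (T₀ δ : ℝ) (hδ0 : 0 < δ)
    (M : ℝ → ℝ) (hM : ContDiff ℝ 2 M)
    (hMT₀ : 0 < M T₀) (hM'T₀ : 0 < deriv M T₀)
    (hineq : ∀ t, T₀ ≤ t → (∀ s ∈ Set.Icc T₀ t, 0 ≤ M s) →
      (deriv M t) ^ 2 ≤ δ * M t * deriv (deriv M) t) :
    ∀ t, T₀ ≤ t → 0 < M t ∧ deriv M T₀ ≤ deriv M t := by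
  have hM₁ : Differentiable ℝ M := hM.differentiable (by norm_num)
  have hM₂ : Differentiable ℝ (deriv M) := hM.differentiable_deriv_two
  have hpos : ∀ t, T₀ ≤ t → 0 < M t :=
    pos_of_forall_pos_on_Ico hM.continuous.continuousOn
      fun c hc => pos_of_pos_on_Ico hδ0 hM₁ hM₂ hMT₀ hM'T₀ hineq hc
  intro t ht
  have hmono := monotoneOn_deriv_of_pos_on_Ico (c := t) hδ0 hM₂ hineq fun s hs => hpos s hs.1
  exact ⟨hpos t ht, hmono (left_mem_Icc.mpr ht) (right_mem_Icc.mpr ht) ht⟩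

theorem stmt_5 (T₀ δ : ℝ) (hT₀ : 0 ≤ T₀) (hδ0 : 0 < δ) (hδ1 : δ < 1)
    (M : ℝ → ℝ) (hM : ContDiff ℝ 2 M)
    (hMT₀ : 0 < M T₀) (hM'T₀ : 0 < deriv M T₀)
    (hineq : ∀ t, T₀ ≤ t → (∀ s ∈ Set.Icc T₀ t, 0 ≤ M s) →
      (deriv M t) ^ 2 ≤ δ * M t * deriv (deriv M) t) :
    ∀ t, T₀ ≤ t → 0 < M t ∧ deriv M T₀ ≤ deriv M t :=
  stmt_5_general T₀ δ hδ0 M hM hMT₀ hM'T₀ hineq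
end

section
/- Let δ ∈ (0,1), T₀ ≥ 0, and M : [T₀,∞) → (0,∞) be C² with M′(T₀) > 0 and (M′(t))² ≤ δ M(t) M″(t) for all t ≥ T₀. Then for all t ≥ T₀: (t − T₀)·M′(T₀)/M(T₀)^{1/δ} ≤ (1/δ − 1)^{-1}·(M(T₀)^{1−1/δ} − M(t)^{1−1/δ}). -/
/-!
Put `p = 1/δ > 1`. The inequality `p M'² ≤ M M''` says exactly that `M' M^{-p}` is
nondecreasing, since `(M' M^{-p})' = M^{-p-1} (M M'' - p M'²)`. As `M' M^{-p}` is the derivative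
of `M^{1-p} / (1-p)`, the mean value theorem bounds the increment of `M^{1-p} / (1-p)` on
`[T₀, t]` from below by `(t - T₀) M'(T₀) M(T₀)^{-p}`, which is the claim.
-/

open Set

theorem hasDerivAt_inv_one_sub_mul_rpow_one_sub {f : ℝ → ℝ} {f' x p : ℝ} (hp : p ≠ 1)
    (hf : HasDerivAt f f' x) (hx : 0 < f x) :
    HasDerivAt (fun y => (1 - p)⁻¹ * f y ^ (1 - p)) (f' * f x ^ (-p)) x := by
  have hderiv := (hf.rpow_const (p := 1 - p) (Or.inl hx.ne')).const_mul (1 - p)⁻¹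
  have : 1 - p ≠ 0 := sub_ne_zero.mpr hp.symm
  rw [show 1 - p - 1 = -p by ring] at hderiv
  exact hderiv.congr_deriv (by field_simp)

section

variable {D : Set ℝ} {f f' f'' : ℝ → ℝ} {p : ℝ}

theorem monotoneOn_mul_rpow_neg (hD : Convex ℝ D)
    (hf : ∀ x ∈ D, HasDerivAt f (f' x) x) (hf' : ∀ x ∈ D, HasDerivAt f' (f'' x) x)
    (hpos : ∀ x ∈ D, 0 < f x) (hineq : ∀ x ∈ D, p * f' x ^ 2 ≤ f x * f'' x) :
    MonotoneOn (fun x => f' x * f x ^ (-p)) D := by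
  have hderiv : ∀ x ∈ D, HasDerivAt (fun x => f' x * f x ^ (-p))
      (f'' x * f x ^ (-p) + f' x * (f' x * -p * f x ^ (-p - 1))) x := fun x hx =>
    (hf' x hx).mul ((hf x hx).rpow_const (Or.inl (hpos x hx).ne'))
  refine monotoneOn_of_deriv_nonneg hD
    (fun x hx => (hderiv x hx).continuousAt.continuousWithinAt)
    (fun x hx => (hderiv x (interior_subset hx)).differentiableAt.differentiableWithinAt)
    fun x hx => ?_
  have hxD := interior_subset hx
  have hfx := hpos x hxD
  rw [(hderiv x hxD).deriv]
  have hsplit : f x ^ (-p) = f x ^ (-p - 1) * f x := by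
    rw [← Real.rpow_add_one hfx.ne']
    ring_nf
  have key : 0 ≤ f x ^ (-p - 1) * (f x * f'' x - p * f' x ^ 2) :=
    mul_nonneg (Real.rpow_nonneg hfx.le _) (sub_nonneg.mpr (hineq x hxD))
  rw [hsplit]
  linarith

theorem sub_mul_mul_rpow_neg_le_inv_one_sub_mul (hD : Convex ℝ D) (hp : p ≠ 1)
    (hf : ∀ x ∈ D, HasDerivAt f (f' x) x) (hf' : ∀ x ∈ D, HasDerivAt f' (f'' x) x)
    (hpos : ∀ x ∈ D, 0 < f x) (hineq : ∀ x ∈ D, p * f' x ^ 2 ≤ f x * f'' x)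
    {a t : ℝ} (ha : a ∈ D) (ht : t ∈ D) (hat : a ≤ t) :
    (t - a) * (f' a * f a ^ (-p)) ≤ (1 - p)⁻¹ * (f t ^ (1 - p) - f a ^ (1 - p)) := by
  have hF : ∀ x ∈ D, HasDerivAt (fun y => (1 - p)⁻¹ * f y ^ (1 - p)) (f' x * f x ^ (-p)) x :=
    fun x hx => hasDerivAt_inv_one_sub_mul_rpow_one_sub hp (hf x hx) (hpos x hx)
  have hmono := monotoneOn_mul_rpow_neg hD hf hf' hpos hineq
  have hDa : Convex ℝ (D ∩ Ici a) := hD.inter (convex_Ici a)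
  have hsub : interior (D ∩ Ici a) ⊆ D ∩ Ici a := interior_subset
  have hincr := hDa.mul_sub_le_image_sub_of_le_deriv
    (fun x hx => (hF x hx.1).continuousAt.continuousWithinAt)
    (fun x hx => (hF x (hsub hx).1).differentiableAt.differentiableWithinAt)
    (fun x hx => by
      rw [(hF x (hsub hx).1).deriv]
      exact hmono ha (hsub hx).1 (hsub hx).2)
    a ⟨ha, self_mem_Ici⟩ t ⟨ht, hat⟩ hat
  linarith

end

theorem stmt_6_general (T₀ δ : ℝ) (hδ0 : 0 < δ) (hδ1 : δ < 1)
    (M : ℝ → ℝ) (hM : ContDiff ℝ 2 M)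
    (hMpos : ∀ t, T₀ ≤ t → 0 < M t)
    (hineq : ∀ t, T₀ ≤ t → (deriv M t) ^ 2 ≤ δ * M t * deriv (deriv M) t) :
    ∀ t, T₀ ≤ t →
      (t - T₀) * deriv M T₀ / (M T₀) ^ (1 / δ) ≤
        (1 / δ - 1)⁻¹ * ((M T₀) ^ (1 - 1 / δ) - (M t) ^ (1 - 1 / δ)) := by
  intro t ht
  have hp : 1 / δ ≠ 1 := by
    rw [ne_eq, div_eq_one_iff_eq hδ0.ne']
    exact hδ1.ne'
  have hineq' : ∀ x ∈ Ici T₀, 1 / δ * deriv M x ^ 2 ≤ M x * deriv (deriv M) x := by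
    intro x hx
    rw [one_div, inv_mul_le_iff₀ hδ0, ← mul_assoc]
    exact hineq x hx
  have key := sub_mul_mul_rpow_neg_le_inv_one_sub_mul (convex_Ici T₀) hp
    (fun x _ => (hM.differentiable (by norm_num) x).hasDerivAt)
    (fun x _ => (hM.differentiable_deriv_two x).hasDerivAt) hMpos hineq'
    self_mem_Ici ht ht
  rw [Real.rpow_neg (hMpos T₀ le_rfl).le] at key
  convert key using 1
  · ring
  · rw [show 1 / δ - 1 = -(1 - 1 / δ) by ring, inv_neg]
    ring

theorem stmt_6 (T₀ δ : ℝ) (hT₀ : 0 ≤ T₀) (hδ0 : 0 < δ) (hδ1 : δ < 1)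
    (M : ℝ → ℝ) (hM : ContDiff ℝ 2 M)
    (hMpos : ∀ t, T₀ ≤ t → 0 < M t) (hM'T₀ : 0 < deriv M T₀)
    (hineq : ∀ t, T₀ ≤ t → (deriv M t) ^ 2 ≤ δ * M t * deriv (deriv M) t) :
    ∀ t, T₀ ≤ t →
      (t - T₀) * deriv M T₀ / (M T₀) ^ (1 / δ) ≤
        (1 / δ - 1)⁻¹ * ((M T₀) ^ (1 - 1 / δ) - (M t) ^ (1 - 1 / δ)) :=
  stmt_6_general T₀ δ hδ0 hδ1 M hM hMpos hineq
end

section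
/- Let δ ∈ (0,1) and suppose M : [T₀,∞) → (0,∞) is C² with M′(T₀) > 0 and (M′(t))² ≤ δ M(t) M″(t) for all t ≥ T₀. Then no such M exists; i.e., the hypotheses are contradictory. -/
/-!
Since `M'' ≥ M'² / (δ M) ≥ 0`, the derivative `M'` increases and stays positive. The function
`g = M / M' + (1/δ - 1) t` then has `g' = 1/δ - M M'' / M'² ≤ 0`, so `g` is bounded above by
`g T₀`; but `M / M' > 0`, so `g` grows at least linearly with slope `1/δ - 1 > 0`.
-/

open Set

lemma monotoneOn_Ici_of_hasDerivAt_nonneg {f f' : ℝ → ℝ} {a : ℝ}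
    (hf : ∀ x, a ≤ x → HasDerivAt f (f' x) x) (hf' : ∀ x, a ≤ x → 0 ≤ f' x) :
    MonotoneOn f (Ici a) :=
  monotoneOn_of_hasDerivWithinAt_nonneg (convex_Ici a)
    (fun x hx ↦ (hf x hx).continuousAt.continuousWithinAt)
    (fun x hx ↦ (hf x (interior_subset hx)).hasDerivWithinAt)
    (fun x hx ↦ hf' x (interior_subset hx))

lemma antitoneOn_Ici_of_hasDerivAt_nonpos {f f' : ℝ → ℝ} {a : ℝ}
    (hf : ∀ x, a ≤ x → HasDerivAt f (f' x) x) (hf' : ∀ x, a ≤ x → f' x ≤ 0) :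
    AntitoneOn f (Ici a) :=
  antitoneOn_of_hasDerivWithinAt_nonpos (convex_Ici a)
    (fun x hx ↦ (hf x hx).continuousAt.continuousWithinAt)
    (fun x hx ↦ (hf x (interior_subset hx)).hasDerivWithinAt)
    (fun x hx ↦ hf' x (interior_subset hx))

lemma not_antitoneOn_Ici_add_mul {h : ℝ → ℝ} {a c : ℝ} (hc : 0 < c)
    (hh : ∀ t, a ≤ t → 0 ≤ h t) : ¬ AntitoneOn (fun t ↦ h t + c * t) (Ici a) := by
  intro hanti
  set t := a + (h a + 1) / c
  have hat : a ≤ t := le_add_of_nonneg_right (div_nonneg (by linarith [hh a le_rfl]) hc.le)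
  have hct : c * t = c * a + (h a + 1) := by simp only [t]; field_simp
  have hle := hanti self_mem_Ici hat hat
  linarith [hh t hat]

section Explosion

variable {M : ℝ → ℝ} {T₀ δ : ℝ}

lemma deriv_pos_of_sq_deriv_le (hM : ContDiff ℝ 2 M) (hδ0 : 0 < δ)
    (hMpos : ∀ t, T₀ ≤ t → 0 < M t) (hM'T₀ : 0 < deriv M T₀)
    (hineq : ∀ t, T₀ ≤ t → (deriv M t) ^ 2 ≤ δ * M t * deriv (deriv M) t) :
    ∀ t, T₀ ≤ t → 0 < deriv M t := by
  have hM' : Differentiable ℝ (deriv M) := hM.differentiable_deriv_two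
  have hmono : MonotoneOn (deriv M) (Ici T₀) := by
    refine monotoneOn_Ici_of_hasDerivAt_nonneg (fun t _ ↦ (hM' t).hasDerivAt) fun t ht ↦ ?_
    exact nonneg_of_mul_nonneg_right ((sq_nonneg _).trans (hineq t ht))
      (mul_pos hδ0 (hMpos t ht))
  exact fun t ht ↦ hM'T₀.trans_le (hmono self_mem_Ici ht ht)

lemma antitoneOn_div_deriv_add_mul (hM : ContDiff ℝ 2 M) (hδ0 : 0 < δ)
    (hM'pos : ∀ t, T₀ ≤ t → 0 < deriv M t)
    (hineq : ∀ t, T₀ ≤ t → (deriv M t) ^ 2 ≤ δ * M t * deriv (deriv M) t) :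
    AntitoneOn (fun t ↦ M t / deriv M t + (δ⁻¹ - 1) * t) (Ici T₀) := by
  refine antitoneOn_Ici_of_hasDerivAt_nonpos
    (f' := fun t ↦ (deriv M t * deriv M t - M t * deriv (deriv M) t) / deriv M t ^ 2
      + (δ⁻¹ - 1) * 1) (fun t ht ↦ ?_) (fun t ht ↦ ?_)
  · exact ((hM.differentiable two_ne_zero t).hasDerivAt.div
      (hM.differentiable_deriv_two t).hasDerivAt (hM'pos t ht).ne').add
      ((hasDerivAt_id t).const_mul _)
  · have hM't := (hM'pos t ht).ne'
    have key : δ⁻¹ ≤ M t * deriv (deriv M) t / deriv M t ^ 2 := by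
      rw [le_div_iff₀ (by positivity), inv_mul_le_iff₀ hδ0]
      linarith [hineq t ht]
    calc _ = δ⁻¹ - M t * deriv (deriv M) t / deriv M t ^ 2 := by field_simp; ring
      _ ≤ 0 := sub_nonpos.2 key

end Explosion

theorem stmt_7 (T₀ δ : ℝ) (hδ0 : 0 < δ) (hδ1 : δ < 1)
    (M : ℝ → ℝ) (hM : ContDiff ℝ 2 M)
    (hMpos : ∀ t, T₀ ≤ t → 0 < M t) (hM'T₀ : 0 < deriv M T₀)
    (hineq : ∀ t, T₀ ≤ t → (deriv M t) ^ 2 ≤ δ * M t * deriv (deriv M) t) :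
    False := by
  have hM'pos := deriv_pos_of_sq_deriv_le hM hδ0 hMpos hM'T₀ hineq
  exact not_antitoneOn_Ici_add_mul (sub_pos.mpr (one_lt_inv₀ hδ0 |>.mpr hδ1))
    (fun t ht ↦ (div_pos (hMpos t ht) (hM'pos t ht)).le)
    (antitoneOn_div_deriv_add_mul hM hδ0 hM'pos hineq)
end

section
/- Let C₂, C₃ > 0 and M : [0,∞) → ℝ be C², bounded above, with |M′(t)| ≤ C₂ M″(t) + C₃ for all t ≥ 0. Then M′(t) ≤ C₃ for all t ≥ 0. -/
/-! If `M' t₀ > C₃`, then `g = M' - C₃` satisfies `g ≤ C₂ g'`, so `exp (-t / C₂) * g t` is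
nondecreasing and `g` stays above `g t₀ > 0` from `t₀` on. Hence `M' ≥ M' t₀ > 0` on
`[t₀, ∞)`, and `M` grows at least linearly, contradicting its boundedness. -/

open Real Set

theorem monotoneOn_exp_mul_of_le_mul_deriv {f : ℝ → ℝ} {a c : ℝ} (hc : 0 < c)
    (hf : Differentiable ℝ f) (hle : ∀ t, a ≤ t → f t ≤ c * deriv f t) :
    MonotoneOn (fun t => exp (-t / c) * f t) (Ici a) := by
  have hderiv : ∀ t, HasDerivAt (fun t => exp (-t / c) * f t)
      (exp (-t / c) * (deriv f t - f t / c)) t := by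
    intro t
    have hexp : HasDerivAt (fun t => exp (-t / c)) (exp (-t / c) * (-1 / c)) t :=
      ((hasDerivAt_id t).neg.div_const c).exp
    exact (hexp.mul (hf t).hasDerivAt).congr_deriv (by ring)
  refine monotoneOn_of_deriv_nonneg (convex_Ici a)
    (fun t _ => (hderiv t).continuousAt.continuousWithinAt)
    (fun t _ => (hderiv t).differentiableAt.differentiableWithinAt) fun t ht => ?_
  rw [interior_Ici] at ht
  rw [(hderiv t).deriv]
  have : f t / c ≤ deriv f t := by rw [div_le_iff₀ hc]; linarith [hle t (le_of_lt ht)]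
  exact mul_nonneg (exp_pos _).le (by linarith)

theorem le_of_le_mul_deriv {f : ℝ → ℝ} {a c : ℝ} (hc : 0 < c) (hf : Differentiable ℝ f)
    (hle : ∀ t, a ≤ t → f t ≤ c * deriv f t) (ha : 0 ≤ f a) {t : ℝ} (ht : a ≤ t) :
    f a ≤ f t := by
  have hmono := monotoneOn_exp_mul_of_le_mul_deriv hc hf hle self_mem_Ici ht ht
  have hexp : exp (-t / c) ≤ exp (-a / c) :=
    exp_le_exp.mpr (div_le_div_of_nonneg_right (neg_le_neg ht) hc.le)
  refine le_of_mul_le_mul_left ?_ (exp_pos (-t / c))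
  calc exp (-t / c) * f a ≤ exp (-a / c) * f a := mul_le_mul_of_nonneg_right hexp ha
    _ ≤ exp (-t / c) * f t := hmono

theorem exists_lt_of_pos_le_deriv {f : ℝ → ℝ} {a c : ℝ} (hc : 0 < c) (hf : Differentiable ℝ f)
    (hderiv : ∀ t, a ≤ t → c ≤ deriv f t) (B : ℝ) : ∃ t, a ≤ t ∧ B < f t := by
  set t := a + (|B - f a| + 1) / c
  have hat : a ≤ t := le_add_of_nonneg_right (by positivity)
  have hgrowth : c * (t - a) ≤ f t - f a :=
    (convex_Icc a t).mul_sub_le_image_sub_of_le_deriv hf.continuous.continuousOn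
      hf.differentiableOn (fun x hx => hderiv x (interior_subset hx).1) a (left_mem_Icc.mpr hat)
      t (right_mem_Icc.mpr hat) hat
  have hct : c * (t - a) = |B - f a| + 1 := by simp only [t]; field_simp; ring
  exact ⟨t, hat, by linarith [le_abs_self (B - f a)]⟩

theorem stmt_10 (C₂ C₃ : ℝ) (hC₂ : 0 < C₂) (hC₃ : 0 < C₃)
    (M : ℝ → ℝ) (hM : ContDiff ℝ 2 M)
    (hbdd : ∃ B, ∀ t, 0 ≤ t → M t ≤ B)
    (hineq : ∀ t, 0 ≤ t → |deriv M t| ≤ C₂ * deriv (deriv M) t + C₃) :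
    ∀ t, 0 ≤ t → deriv M t ≤ C₃ := by
  obtain ⟨hM₁, -, hM₂⟩ := contDiff_succ_iff_deriv.mp (show ContDiff ℝ (1 + 1) M from hM)
  have hM' : Differentiable ℝ (deriv M) := hM₂.differentiable one_ne_zero
  intro t₀ ht₀
  by_contra! hlt
  have hgronwall : ∀ t, 0 ≤ t → deriv M t - C₃ ≤ C₂ * deriv (fun s => deriv M s - C₃) t :=
    fun t ht => by
      rw [deriv_sub_const]
      linarith [hineq t ht, le_abs_self (deriv M t)]
  have hincr : ∀ t, t₀ ≤ t → deriv M t₀ ≤ deriv M t := fun t ht => by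
    have := le_of_le_mul_deriv hC₂ (hM'.sub_const C₃)
      (fun s hs => hgronwall s (ht₀.trans hs)) (by linarith) ht
    linarith
  obtain ⟨B, hB⟩ := hbdd
  obtain ⟨t, ht, hBt⟩ := exists_lt_of_pos_le_deriv (hC₃.trans hlt) hM₁ hincr B
  linarith [hB t (ht₀.trans ht)]
end
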